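/- arXiv:2405.13310 — 4 statements merged into one kernel-verified Lean document; each statement's English description precedes it below -/
import Mathlib

section
/- For the datastream FEP construction, every Send call with flush flag set fully empties both sender buffers: if Send(st_S, m, p, 1) returns (st_S', c), then in the returned state st_S' both the plaintext buffer buf and the output buffer obuf are the empty string, and the returned fragment c consists of the entire contents of the output buffer obuf at the moment of return. -/
/-! Byte strings -/

abbrev Byte := Fin 256
abbrev Bytes := List Byte

def byte (n : ℕ) : Byte := ⟨n % 256, Nat.mod_lt n (by norm_num)⟩
def b0 : Byte := byte 0
def b1 : Byte := byte 1

/-- Two-byte (big-endian) encoding of a natural number. -/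
def enc2 (n : ℕ) : Bytes := [byte (n / 256), byte n]

/-- Decode the first two bytes of a byte string as a big-endian natural number. -/
def dec2 : Bytes → ℕ
  | a :: b :: _ => 256 * a.val + b.val
  | _ => 0

/-- A deterministic nonce-based AEAD scheme on byte strings, with perfect
correctness, length additivity (`ℓ_Tag` bytes of overhead), and soundness of
decryption (`Dec` succeeds only on genuine encryptions). -/
structure AEAD where
  Key : Type
  lTag : ℕ
  lTag_pos : 0 < lTag
  Enc : Key → ℕ → Bytes → Bytes
  Dec : Key → ℕ → Bytes → Option Bytes
  correct : ∀ k n m, Dec k n (Enc k n m) = some m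
  lenAdd : ∀ k n m, (Enc k n m).length = m.length + lTag
  decSound : ∀ k n c m, Dec k n c = some m → c = Enc k n m

/-- `ℓ_len = 2 + ℓ_Tag`, the size of a length block. -/
def lLen (A : AEAD) : ℕ := 2 + A.lTag
/-- `ol = 2^16 - 1`, the largest payload-block length. -/
def ol : ℕ := 2 ^ 16 - 1
/-- `il = 2^16 - 3 - ℓ_Tag`, the largest plaintext length fitting in a payload block. -/
def il (A : AEAD) : ℕ := 2 ^ 16 - 3 - A.lTag

/-- Sender state: key, sequence number, plaintext buffer, output buffer. -/
structure SenderSt (A : AEAD) where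
  k : A.Key
  seqno : ℕ
  buf : Bytes
  obuf : Bytes

/-- The condition under which `Send` returns:
`|obuf| ≥ p` and (`f = 0` or `buf = ε`). -/
def retCond (A : AEAD) (st : SenderSt A) (p : ℤ) (f : Bool) : Prop :=
  p ≤ (st.obuf.length : ℤ) ∧ (f = false ∨ st.buf = [])

instance (A : AEAD) (st : SenderSt A) (p : ℤ) (f : Bool) :
    Decidable (retCond A st p f) := by
  unfold retCond
  infer_instance

/-- One recursive step of `Send` (lines 7–18): form a length block and a
payload block (with minimal padding `ℓ_p` so that the output buffer together
with the new pair reaches `p` bytes, or the payload block is maximal), append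
them to the output buffer, and consume `o = min(|buf|, il)` plaintext bytes. -/
def mkBlocks (A : AEAD) (st : SenderSt A) (p : ℤ) : SenderSt A :=
  let o : ℕ := min st.buf.length (il A)
  let base : ℕ := 2 + o + A.lTag
  let lp : ℕ := min (p - ((st.obuf.length + base + lLen A : ℕ) : ℤ)).toNat (ol - base)
  let lc : ℕ := base + lp
  { k := st.k
    seqno := st.seqno + 2
    buf := st.buf.drop o
    obuf := st.obuf ++ A.Enc st.k st.seqno (enc2 lc) ++
      A.Enc st.k (st.seqno + 1) (enc2 lp ++ List.replicate lp b0 ++ st.buf.take o) }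

/-- The recursion underlying `Send`, with explicit fuel bounding the number of
recursive calls; `none` means the fuel ran out before `Send` returned. -/
def sendFuel (A : AEAD) : ℕ → SenderSt A → ℤ → Bool → Option (SenderSt A × Bytes)
  | 0, _, _, _ => none
  | fuel + 1, st, p, f =>
    if retCond A st p f then
      let t : ℕ := (max p (if f then (st.obuf.length : ℤ) else 0)).toNat
      some ({ st with obuf := st.obuf.drop t }, st.obuf.take t)
    else
      sendFuel A fuel (mkBlocks A st p) p f

/-- `Send(st_S, m, p, f)`, computed with the given recursion fuel. -/
def sendCall (A : AEAD) (fuel : ℕ) (st : SenderSt A) (m : Bytes) (p : ℤ) (f : Bool) :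
    Option (SenderSt A × Bytes) :=
  sendFuel A fuel { st with buf := st.buf ++ m } p f

/-- Receiver state: key, sequence number, ciphertext buffer, fail flag. -/
structure RecvSt (A : AEAD) where
  k : A.Key
  seqno : ℕ
  buf : Bytes
  fail : Bool

/-- One iteration of the `Recv` processing loop.  `Sum.inl` means the loop
continues with the new state and accumulated output; `Sum.inr` means `Recv`
returns (either by a decryption failure, which sets the fail flag and returns
`(ε, 0)`, or by stopping the loop and returning the accumulated message). -/
def recvStep (A : AEAD) (st : RecvSt A) (m : Bytes) :
    (RecvSt A × Bytes) ⊕ (RecvSt A × Bytes × Bool) :=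
  if lLen A ≤ st.buf.length then
    match A.Dec st.k st.seqno (st.buf.take (lLen A)) with
    | none => Sum.inr ({ st with fail := true }, [], false)
    | some lb =>
      let lc := dec2 lb
      if lLen A + lc ≤ st.buf.length then
        let st' : RecvSt A := { st with buf := st.buf.drop (lLen A + lc) }
        match A.Dec st.k (st.seqno + 1) ((st.buf.drop (lLen A)).take lc) with
        | none => Sum.inr ({ st' with fail := true }, [], false)
        | some m' =>
          let lp := min (dec2 m') (m'.length - 2)
          Sum.inl ({ st' with seqno := st.seqno + 2 }, m ++ m'.drop (2 + lp))
      else Sum.inr (st, m, false)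
  else Sum.inr (st, m, false)

/-- The `Recv` processing loop, with explicit fuel bounding the number of
iterations; `none` means the fuel ran out before the loop finished. -/
def recvLoop (A : AEAD) : ℕ → RecvSt A → Bytes → Option (RecvSt A × Bytes × Bool)
  | 0, _, _ => none
  | fuel + 1, st, m =>
    match recvStep A st m with
    | Sum.inr r => some r
    | Sum.inl (st', m') => recvLoop A fuel st' m'

/-- `Recv(st_R, c)`, computed with the given loop fuel. -/
def recvCall (A : AEAD) (fuel : ℕ) (st : RecvSt A) (c : Bytes) :
    Option (RecvSt A × Bytes × Bool) :=
  if st.fail then some (st, [], false)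
  else recvLoop A fuel { st with buf := st.buf ++ c } []

/-!
With the flush flag set, `Send` returns only from a state whose plaintext buffer is empty and
whose output buffer holds at least `p` bytes; it then removes `max(p, |obuf|) = |obuf|` bytes,
i.e. the whole output buffer. Induction on the fuel finds that returning state.
-/

lemma retCond_flush_iff {A : AEAD} {st : SenderSt A} {p : ℤ} :
    retCond A st p true ↔ p ≤ (st.obuf.length : ℤ) ∧ st.buf = [] := by
  simp [retCond]

lemma sendFuel_succ_of_retCond_flush {A : AEAD} {st : SenderSt A} {p : ℤ} (fuel : ℕ)
    (hret : retCond A st p true) :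
    sendFuel A (fuel + 1) st p true = some ({ st with obuf := [] }, st.obuf) := by
  have hlen : (max p (st.obuf.length : ℤ)).toNat = st.obuf.length := by
    rw [max_eq_right hret.1, Int.toNat_natCast]
  simp [sendFuel, hret, hlen]

lemma exists_retCond_of_sendFuel_flush {A : AEAD} {fuel : ℕ} {st st' : SenderSt A} {p : ℤ}
    {c : Bytes} (h : sendFuel A fuel st p true = some (st', c)) :
    ∃ stR : SenderSt A, retCond A stR p true ∧ c = stR.obuf ∧
      st' = { stR with obuf := [] } := by
  induction fuel generalizing st with
  | zero => simp [sendFuel] at h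
  | succ fuel ih =>
    by_cases hret : retCond A st p true
    · rw [sendFuel_succ_of_retCond_flush fuel hret, Option.some.injEq, Prod.mk.injEq] at h
      exact ⟨st, hret, h.2.symm, h.1.symm⟩
    · rw [sendFuel, if_neg hret] at h
      exact ih h

/-- Every `Send` call with flush flag set fully empties both
sender buffers: if `Send(st_S, m, p, 1)` returns `(st_S', c)`, then in `st_S'`
both the plaintext buffer `buf` and the output buffer `obuf` are empty, and
the returned fragment `c` is the entire contents of the output buffer at the
moment of return. -/
theorem stmt2 (A : AEAD) (fuel : ℕ) (st : SenderSt A) (m : Bytes) (p : ℤ)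
    (st' : SenderSt A) (c : Bytes)
    (h : sendCall A fuel st m p true = some (st', c)) :
    st'.buf = [] ∧ st'.obuf = [] ∧
    ∃ stR : SenderSt A, retCond A stR p true ∧ c = stR.obuf ∧
      st' = { stR with obuf := [] } := by
  obtain ⟨stR, hret, hc, rfl⟩ := exists_retCond_of_sendFuel_flush h
  exact ⟨(retCond_flush_iff.mp hret).2, rfl, stR, hret, hc, rfl⟩
end

section
/- The datastream FEP construction satisfies datastream correctness with respect to the never-close function C ≡ 0: for every honest execution with Send plaintext inputs M, length inputs P, flush-flag inputs F, Send outputs C, Recv inputs C', Recv message outputs M', and Recv close outputs CL, one has (1) Stream Preservation: the concatenation of M' is a prefix of the concatenation of M; (2) Flushing: if the final Send call has flush flag 1 and the concatenation of C' equals the concatenation of C, then the concatenation of M' equals the concatenation of M; (3) Close Coherence: once some Recv call outputs close flag 1, every later Recv call outputs (ε, 0); and (4) Close Correctness: every Recv close output equals 0. -/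
/-! Honest executions of the datastream channel -/

/-- A channel operation: a `Send` call or a `Recv` call. -/
inductive Op where
  | send (m : Bytes) (p : ℤ) (f : Bool)
  | recv (c : Bytes)

/-- A configuration of an execution: the sender and receiver states, together
with the concatenation of all plaintexts passed to `Send` so far, the
concatenation of all ciphertext fragments output by `Send` so far, the
concatenation of all ciphertext fragments passed to `Recv` so far, and the
list of `(message, close flag)` outputs of `Recv` so far. -/
structure Config (A : AEAD) where
  sst : SenderSt A
  rst : RecvSt A
  sentMsgs : Bytes
  sentOut : Bytes
  recvIn : Bytes
  recvOuts : List (Bytes × Bool)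

/-- The configuration right after `Init`, with shared key `k`. -/
def initConfig (A : AEAD) (k : A.Key) : Config A :=
  { sst := ⟨k, 0, [], []⟩
    rst := ⟨k, 0, [], false⟩
    sentMsgs := []
    sentOut := []
    recvIn := []
    recvOuts := [] }

/-- Honest executions: `Exec A cfg ops cfg'` holds when the sequence of
channel operations `ops`, executed from configuration `cfg` (threading the
sender state through the `Send` calls and the receiver state through the
`Recv` calls, and where at every point the concatenation of the ciphertext
fragments passed to `Recv` so far is a prefix of the concatenation of the
ciphertext fragments output by `Send` so far), leads to configuration
`cfg'`. -/
inductive Exec (A : AEAD) : Config A → List Op → Config A → Prop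
  | nil : ∀ cfg : Config A, Exec A cfg [] cfg
  | send : ∀ (cfg : Config A) (m : Bytes) (p : ℤ) (f : Bool) (fuel : ℕ)
      (st' : SenderSt A) (c : Bytes) (ops : List Op) (cfg' : Config A),
      sendCall A fuel cfg.sst m p f = some (st', c) →
      Exec A { cfg with
                 sst := st'
                 sentMsgs := cfg.sentMsgs ++ m
                 sentOut := cfg.sentOut ++ c } ops cfg' →
      Exec A cfg (Op.send m p f :: ops) cfg'
  | recv : ∀ (cfg : Config A) (c : Bytes) (fuel : ℕ) (st' : RecvSt A)
      (m : Bytes) (cl : Bool) (ops : List Op) (cfg' : Config A),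
      (cfg.recvIn ++ c) <+: cfg.sentOut →
      recvCall A fuel cfg.rst c = some (st', m, cl) →
      Exec A { cfg with
                 rst := st'
                 recvIn := cfg.recvIn ++ c
                 recvOuts := cfg.recvOuts ++ [(m, cl)] } ops cfg' →
      Exec A cfg (Op.recv c :: ops) cfg'

/-- The concatenation `M_r` of the message outputs of `Recv` so far. -/
def recvConcat (A : AEAD) (cfg : Config A) : Bytes :=
  (cfg.recvOuts.map Prod.fst).foldr (· ++ ·) []

/-- The flush flags of the `Send` calls among a list of operations, in order. -/
def sendFlags (ops : List Op) : List Bool :=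
  ops.filterMap fun o => match o with | Op.send _ _ f => some f | Op.recv _ => none

/-! ### Auxiliary development for the proof -/

section Aux

lemma dec2_enc2 (n : ℕ) : dec2 (enc2 n) = n % 65536 := by
  simp only [enc2, dec2, byte]
  omega

lemma enc2_length (n : ℕ) : (enc2 n).length = 2 := rfl

/-- The padded payload of a frame. -/
def payloadB (lp : ℕ) (m : Bytes) : Bytes := enc2 lp ++ List.replicate lp b0 ++ m

lemma payloadB_length (lp : ℕ) (m : Bytes) : (payloadB lp m).length = 2 + lp + m.length := by
  simp [payloadB, enc2]
  omega

lemma dec2_payloadB (lp : ℕ) (m : Bytes) : dec2 (payloadB lp m) = lp % 65536 := by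
  simp only [payloadB, enc2, List.cons_append, List.nil_append, dec2, byte]
  omega

lemma payloadB_drop (lp : ℕ) (m : Bytes) : (payloadB lp m).drop (2 + lp) = m := by
  have h : (enc2 lp ++ List.replicate lp b0).length = 2 + lp := by simp [enc2]; omega
  simpa [payloadB, List.append_assoc] using List.drop_left' (l₂ := m) h

/-- The `ℓ_c` value of a frame `(ℓ_p, m)`. -/
def flc (A : AEAD) (g : ℕ × Bytes) : ℕ := 2 + g.1 + g.2.length + A.lTag

/-- A good frame: padding fits in two bytes, and either the whole payload
block length fits in two bytes or the frame is degenerate. -/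
def FOK (A : AEAD) (g : ℕ × Bytes) : Prop :=
  g.1 < 65536 ∧ (flc A g < 65536 ∨ (g.2 = [] ∧ g.1 = 0 ∧ 65536 ≤ 2 + A.lTag))

/-- The ciphertext bytes of one frame starting at sequence number `s`. -/
def frameB (A : AEAD) (k : A.Key) (s : ℕ) (g : ℕ × Bytes) : Bytes :=
  A.Enc k s (enc2 (flc A g)) ++ A.Enc k (s + 1) (payloadB g.1 g.2)

lemma frameB_length (A : AEAD) (k : A.Key) (s : ℕ) (g : ℕ × Bytes) :
    (frameB A k s g).length = lLen A + flc A g := by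
  simp [frameB, A.lenAdd, payloadB_length, enc2_length, lLen, flc]

/-- The ciphertext bytes of a list of frames starting at sequence number `s`. -/
def stream (A : AEAD) (k : A.Key) : ℕ → List (ℕ × Bytes) → Bytes
  | _, [] => []
  | s, g :: t => frameB A k s g ++ stream A k (s + 2) t

lemma stream_nil (A : AEAD) (k : A.Key) (s : ℕ) : stream A k s [] = [] := rfl

lemma stream_cons (A : AEAD) (k : A.Key) (s : ℕ) (g : ℕ × Bytes) (t : List (ℕ × Bytes)) :
    stream A k s (g :: t) = frameB A k s g ++ stream A k (s + 2) t := rfl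

lemma stream_append (A : AEAD) (k : A.Key) (l₁ l₂ : List (ℕ × Bytes)) :
    ∀ s, stream A k s (l₁ ++ l₂) = stream A k s l₁ ++ stream A k (s + 2 * l₁.length) l₂ := by
  induction l₁ with
  | nil => intro s; simp [stream_nil]
  | cons g t ih =>
    intro s
    rw [List.cons_append, stream_cons, stream_cons, ih (s + 2), List.append_assoc]
    have : s + 2 + 2 * t.length = s + 2 * (g :: t).length := by simp [List.length_cons]; omega
    rw [this]

/-- The concatenation of the messages of a list of frames. -/
def msgsOf (fr : List (ℕ × Bytes)) : Bytes := (fr.map Prod.snd).flatten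

lemma msgsOf_nil : msgsOf [] = [] := rfl

lemma msgsOf_cons (g : ℕ × Bytes) (t : List (ℕ × Bytes)) :
    msgsOf (g :: t) = g.2 ++ msgsOf t := by simp [msgsOf]

lemma msgsOf_append (l₁ l₂ : List (ℕ × Bytes)) :
    msgsOf (l₁ ++ l₂) = msgsOf l₁ ++ msgsOf l₂ := by simp [msgsOf]

lemma msgsOf_eq_nil {l : List (ℕ × Bytes)} (h : ∀ g ∈ l, g.2 = []) : msgsOf l = [] := by
  induction l with
  | nil => rfl
  | cons g t ih =>
    rw [msgsOf_cons, h g List.mem_cons_self, List.nil_append]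
    exact ih fun g hg => h g (List.mem_cons_of_mem _ hg)

lemma foldr_map_snoc (L : List (Bytes × Bool)) (x : Bytes × Bool) :
    ((L ++ [x]).map Prod.fst).foldr (· ++ ·) [] =
      (L.map Prod.fst).foldr (· ++ ·) [] ++ x.1 := by
  induction L with
  | nil => simp
  | cons a t ih =>
    simp only [List.cons_append, List.map_cons, List.foldr_cons, ih, List.append_assoc]

/-! ### The main invariant -/

def ChInv (A : AEAD) (k : A.Key) (cfg : Config A) : Prop :=
  ∃ fr : List (ℕ × Bytes),
    (∀ g ∈ fr, FOK A g) ∧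
    cfg.sst.k = k ∧ cfg.rst.k = k ∧
    cfg.sst.seqno = 2 * fr.length ∧
    cfg.sentMsgs = msgsOf fr ++ cfg.sst.buf ∧
    cfg.sentOut ++ cfg.sst.obuf = stream A k 0 fr ∧
    (∀ q ∈ cfg.recvOuts, q.2 = false) ∧
    ((∃ r, r ≤ fr.length ∧
        cfg.rst.fail = false ∧
        cfg.rst.seqno = 2 * r ∧
        cfg.recvIn = stream A k 0 (fr.take r) ++ cfg.rst.buf ∧
        cfg.rst.buf <+: stream A k (2 * r) (fr.drop r) ∧
        (∀ h : r < fr.length, cfg.rst.buf.length < lLen A + flc A fr[r]) ∧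
        recvConcat A cfg = msgsOf (fr.take r))
     ∨ (cfg.rst.fail = true ∧ 65536 ≤ 2 + A.lTag ∧ recvConcat A cfg = []))

/-! ### Sender analysis -/

lemma sendFuel_ok {A : AEAD} (k : A.Key) :
    ∀ (fuel : ℕ) (st : SenderSt A) (p : ℤ) (f : Bool) (st' : SenderSt A) (c : Bytes),
    st.k = k → sendFuel A fuel st p f = some (st', c) →
    ∃ new : List (ℕ × Bytes),
      (∀ g ∈ new, FOK A g) ∧ st'.k = k ∧
      st'.seqno = st.seqno + 2 * new.length ∧
      msgsOf new ++ st'.buf = st.buf ∧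
      c ++ st'.obuf = st.obuf ++ stream A k st.seqno new ∧
      (f = true → st'.buf = [] ∧ st'.obuf = []) := by
  intro fuel
  induction fuel with
  | zero => intro st p f st' c hk h; exact absurd h (by simp [sendFuel])
  | succ n ih =>
    intro st p f st' c hk h
    rw [sendFuel] at h
    by_cases hrc : retCond A st p f
    · rw [if_pos hrc] at h
      simp only [Option.some.injEq, Prod.mk.injEq] at h
      obtain ⟨hst, hc⟩ := h
      subst hst; subst hc
      obtain ⟨h1, h2⟩ := hrc
      refine ⟨[], by simp, hk, by simp, by simp [msgsOf_nil], ?_, ?_⟩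
      · simp [stream_nil, List.take_append_drop]
      · intro hf
        subst hf
        have hb : st.buf = [] := by
          rcases h2 with h2 | h2
          · simp at h2
          · exact h2
        refine ⟨hb, ?_⟩
        simp only
        rw [List.drop_eq_nil_iff]
        simp only [if_true]
        have h3 := le_max_right p ((st.obuf.length : ℤ))
        omega
    · rw [if_neg hrc] at h
      obtain ⟨new1, hFOK1, hk', hseq', hbuf', hobuf', hf'⟩ :=
        ih (mkBlocks A st p) p f st' c (by simpa [mkBlocks] using hk) h
      set o := min st.buf.length (il A) with ho
      set lp := min (p - ((st.obuf.length + (2 + o + A.lTag) + lLen A : ℕ) : ℤ)).toNat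
        (ol - (2 + o + A.lTag)) with hlp
      have hmb_seq : (mkBlocks A st p).seqno = st.seqno + 2 := rfl
      have hmb_buf : (mkBlocks A st p).buf = st.buf.drop o := rfl
      have hmb_obuf : (mkBlocks A st p).obuf =
          st.obuf ++ A.Enc st.k st.seqno (enc2 ((2 + o + A.lTag) + lp)) ++
            A.Enc st.k (st.seqno + 1)
              (enc2 lp ++ List.replicate lp b0 ++ st.buf.take o) := rfl
      have hole : o ≤ st.buf.length := min_le_left _ _
      have htol : (st.buf.take o).length = o := by simp [List.length_take]; omega
      have hlp_le : lp ≤ ol - (2 + o + A.lTag) := min_le_right _ _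
      have hol : ol = 65535 := rfl
      have hil : il A = 65536 - 3 - A.lTag := rfl
      refine ⟨(lp, st.buf.take o) :: new1, ?_, hk', ?_, ?_, ?_, hf'⟩
      · intro g hg
        rcases List.mem_cons.mp hg with hg | hg
        · subst hg
          constructor
          · simp only
            omega
          · by_cases hbase : 2 + o + A.lTag ≤ 65535
            · left
              simp only [flc, htol]
              omega
            · right
              have hT : 65534 ≤ A.lTag := by omega
              have ho0 : o = 0 := by omega
              refine ⟨by simp [ho0], by omega, by omega⟩
        · exact hFOK1 g hg
      · rw [hseq', hmb_seq]
        simp [List.length_cons]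
        omega
      · rw [msgsOf_cons, List.append_assoc, hbuf', hmb_buf]
        simp only
        exact List.take_append_drop o st.buf
      · rw [hobuf', hmb_obuf, stream_cons, hmb_seq]
        have harg : (2 + o + A.lTag) + lp = flc A (lp, st.buf.take o) := by
          simp only [flc, htol]
          omega
        rw [harg, hk]
        simp [frameB, payloadB, List.append_assoc]

end Aux

/-! ### Receiver analysis -/

section Recv

variable {A : AEAD}

lemma recvLoop_ok (k : A.Key) :
    ∀ (fuel : ℕ) (st : RecvSt A) (macc : Bytes) (rest : List (ℕ × Bytes))
      (st' : RecvSt A) (mout : Bytes) (cl : Bool),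
    st.k = k → st.fail = false → (∀ g ∈ rest, FOK A g) →
    st.buf <+: stream A k st.seqno rest →
    recvLoop A fuel st macc = some (st', mout, cl) →
    cl = false ∧ st'.k = k ∧
    ((∃ d, d ≤ rest.length ∧ st'.fail = false ∧
        st'.seqno = st.seqno + 2 * d ∧
        mout = macc ++ msgsOf (rest.take d) ∧
        st.buf = stream A k st.seqno (rest.take d) ++ st'.buf ∧
        st'.buf <+: stream A k (st.seqno + 2 * d) (rest.drop d) ∧
        (∀ h : d < rest.length, st'.buf.length < lLen A + flc A rest[d]))
     ∨ (st'.fail = true ∧ mout = [] ∧ 65536 ≤ 2 + A.lTag)) := by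
  intro fuel
  induction fuel with
  | zero => intro st macc rest st' mout cl hk hf hFOK hpre h; exact absurd h (by simp [recvLoop])
  | succ n ih =>
    intro st macc rest st' mout cl hk hf hFOK hpre h
    rw [recvLoop] at h
    by_cases hlen : lLen A ≤ st.buf.length
    · -- enough bytes for a length block, so `rest` is nonempty
      obtain ⟨tail, htail⟩ := hpre
      cases rest with
      | nil =>
        exfalso
        rw [stream_nil] at htail
        have hb : st.buf = [] := by
          have hl := congrArg List.length htail
          simp at hl
          exact hl.1
        rw [hb] at hlen
        simp [lLen] at hlen
      | cons g rtail =>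
        have hg : FOK A g := hFOK g List.mem_cons_self
        rw [stream_cons, frameB] at htail
        have hE1len : (A.Enc k st.seqno (enc2 (flc A g))).length = lLen A := by
          simp [A.lenAdd, enc2_length, lLen]
        have htake : st.buf.take (lLen A) = A.Enc k st.seqno (enc2 (flc A g)) := by
          calc st.buf.take (lLen A) = (st.buf ++ tail).take (lLen A) :=
                (List.take_append_of_le_length hlen).symm
            _ = A.Enc k st.seqno (enc2 (flc A g)) := by
                rw [htail, List.append_assoc, List.take_append_of_le_length (le_of_eq hE1len.symm),
                  ← hE1len, List.take_length]
        have hdec1 : A.Dec st.k st.seqno (st.buf.take (lLen A)) = some (enc2 (flc A g)) := by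
          rw [htake, hk]; exact A.correct k st.seqno _
        by_cases hfit : lLen A + flc A g % 65536 ≤ st.buf.length
        · -- a full (apparent) frame is available
          rcases hg.2 with hgood | hbad
          · -- good frame: process it and continue
            have hmod : flc A g % 65536 = flc A g := Nat.mod_eq_of_lt hgood
            rw [hmod] at hfit
            have hE2len : (A.Enc k (st.seqno + 1) (payloadB g.1 g.2)).length = flc A g := by
              simp [A.lenAdd, payloadB_length, flc]
            have hframe : (A.Enc k st.seqno (enc2 (flc A g)) ++
                A.Enc k (st.seqno + 1) (payloadB g.1 g.2)).length = lLen A + flc A g := by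
              simp [hE1len, hE2len]
            have hbuftake : st.buf.take (lLen A + flc A g) =
                A.Enc k st.seqno (enc2 (flc A g)) ++ A.Enc k (st.seqno + 1) (payloadB g.1 g.2) := by
              calc st.buf.take (lLen A + flc A g) = (st.buf ++ tail).take (lLen A + flc A g) :=
                    (List.take_append_of_le_length hfit).symm
                _ = _ := by
                    rw [htail, List.take_append_of_le_length (le_of_eq hframe.symm), ← hframe,
                      List.take_length]
            have hbufeq : st.buf = (A.Enc k st.seqno (enc2 (flc A g)) ++
                A.Enc k (st.seqno + 1) (payloadB g.1 g.2)) ++ st.buf.drop (lLen A + flc A g) := by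
              conv_lhs => rw [← List.take_append_drop (lLen A + flc A g) st.buf]
              rw [hbuftake]
            have htailpre : st.buf.drop (lLen A + flc A g) <+: stream A k (st.seqno + 2) rtail := by
              refine ⟨tail, ?_⟩
              have h5 := htail
              rw [hbufeq, List.append_assoc, List.append_assoc] at h5
              conv at h5 => rw [List.append_assoc]
              exact List.append_cancel_left (List.append_cancel_left h5)
            have hslice : (st.buf.drop (lLen A)).take (flc A g) =
                A.Enc k (st.seqno + 1) (payloadB g.1 g.2) := by
              conv_lhs => rw [hbufeq]
              rw [List.append_assoc, List.drop_left' hE1len,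
                List.take_append_of_le_length (le_of_eq hE2len.symm), ← hE2len, List.take_length]
            have hdec2 : A.Dec st.k (st.seqno + 1) ((st.buf.drop (lLen A)).take (flc A g)) =
                some (payloadB g.1 g.2) := by
              rw [hslice, hk]; exact A.correct k (st.seqno + 1) _
            have hlp : min (dec2 (payloadB g.1 g.2)) ((payloadB g.1 g.2).length - 2) = g.1 := by
              rw [dec2_payloadB, Nat.mod_eq_of_lt hg.1, payloadB_length]
              omega
            have hstep : recvStep A st macc = Sum.inl
                (⟨st.k, st.seqno + 2, st.buf.drop (lLen A + flc A g), st.fail⟩,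
                 macc ++ g.2) := by
              rw [recvStep, if_pos hlen, hdec1]
              simp only [dec2_enc2, hmod, if_pos hfit, hdec2, hlp]
              rw [payloadB_drop]
            rw [hstep] at h
            obtain ⟨hcl, hk2, hrest⟩ := ih ⟨st.k, st.seqno + 2, st.buf.drop (lLen A + flc A g), st.fail⟩
              (macc ++ g.2) rtail st' mout cl hk hf
              (fun g' hg' => hFOK g' (List.mem_cons_of_mem _ hg')) htailpre h
            refine ⟨hcl, hk2, ?_⟩
            rcases hrest with ⟨d, hd, hfail', hseq', hmout, hbufeq', hpre', hbound'⟩ | hbadr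
            · left
              refine ⟨d + 1, by simpa using Nat.succ_le_succ hd, hfail', ?_, ?_, ?_, ?_, ?_⟩
              · simp only at hseq'
                omega
              · rw [hmout, List.take_succ_cons, msgsOf_cons, List.append_assoc]
              · rw [List.take_succ_cons, stream_cons, List.append_assoc, ← hbufeq']
                simp only [frameB] at hbufeq ⊢
                exact hbufeq
              · have hnum : st.seqno + 2 + 2 * d = st.seqno + 2 * (d + 1) := by omega
                rw [List.drop_succ_cons, ← hnum]
                exact hpre'
              · intro hlt
                have hlt' : d < rtail.length := by simpa using hlt
                simpa [List.getElem_cons_succ] using hbound' hlt'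
            · exact Or.inr hbadr
          · -- degenerate frame: the payload decryption must fail
            obtain ⟨hm, hlp0, hT⟩ := hbad
            have hlc : flc A g = 2 + A.lTag := by simp [flc, hm, hlp0]
            have hlt : flc A g % 65536 < A.lTag := by
              rw [hlc]; omega
            have hslicelen : ((st.buf.drop (lLen A)).take (flc A g % 65536)).length =
                flc A g % 65536 := by
              simp [List.length_take, List.length_drop]
              omega
            have hdecn : A.Dec st.k (st.seqno + 1) ((st.buf.drop (lLen A)).take (flc A g % 65536)) =
                none := by
              cases hd : A.Dec st.k (st.seqno + 1) ((st.buf.drop (lLen A)).take (flc A g % 65536)) with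
              | none => rfl
              | some m'' =>
                exfalso
                have := A.decSound _ _ _ _ hd
                have hl := congrArg List.length this
                rw [hslicelen, A.lenAdd] at hl
                omega
            have hstep : recvStep A st macc = Sum.inr
                (⟨st.k, st.seqno, st.buf.drop (lLen A + flc A g % 65536), true⟩, [], false) := by
              rw [recvStep, if_pos hlen, hdec1]
              simp only [dec2_enc2, if_pos hfit, hdecn]
            rw [hstep] at h
            simp only [Option.some.injEq, Prod.mk.injEq] at h
            obtain ⟨h1, h2, h3⟩ := h
            subst h1; subst h2; subst h3
            exact ⟨rfl, hk, Or.inr ⟨rfl, rfl, hT⟩⟩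
        · -- not enough bytes for the payload: the loop stops
          have hstep : recvStep A st macc = Sum.inr (st, macc, false) := by
            rw [recvStep, if_pos hlen, hdec1]
            simp only [dec2_enc2, if_neg hfit]
          rw [hstep] at h
          simp only [Option.some.injEq, Prod.mk.injEq] at h
          obtain ⟨h1, h2, h3⟩ := h
          subst h1; subst h2; subst h3
          refine ⟨rfl, hk, Or.inl ⟨0, by simp, hf, by simp, by simp [msgsOf_nil], by simp [stream_nil], ?_, ?_⟩⟩
          · simp only [Nat.mul_zero, Nat.add_zero, List.drop_zero, stream_cons, frameB]
            exact ⟨tail, htail⟩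
          · intro _
            simp only [List.getElem_cons_zero]
            have := Nat.mod_le (flc A g) 65536
            omega
    · -- not enough bytes for a length block: the loop stops
      have hstep : recvStep A st macc = Sum.inr (st, macc, false) := by
        rw [recvStep, if_neg hlen]
      rw [hstep] at h
      simp only [Option.some.injEq, Prod.mk.injEq] at h
      obtain ⟨h1, h2, h3⟩ := h
      subst h1; subst h2; subst h3
      refine ⟨rfl, hk, Or.inl ⟨0, by simp, hf, by simp, by simp [msgsOf_nil], by simp [stream_nil], ?_, ?_⟩⟩
      · simpa [stream_nil] using hpre
      · intro hlt
        have h0 : lLen A = 2 + A.lTag := rfl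
        omega

end Recv

/-! ### The invariant along executions -/

section Exec

variable {A : AEAD}

lemma exec_inv (k : A.Key) :
    ∀ {cfg ops cfg'}, Exec A cfg ops cfg' → ChInv A k cfg → ChInv A k cfg' := by
  intro cfg ops cfg' hE
  induction hE with
  | nil cfg => exact id
  | send cfg m p f fuel st' c ops cfg' hs he ih =>
    intro hI
    apply ih
    obtain ⟨fr, hFOK, hsk, hrk, hseq, hmsgs, hout, houts, hrecv⟩ := hI
    rw [sendCall] at hs
    obtain ⟨new, hFOKn, hk', hseq', hbuf', hobuf', -⟩ :=
      sendFuel_ok k fuel { cfg.sst with buf := cfg.sst.buf ++ m } p f st' c hsk hs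
    simp only at hseq' hbuf' hobuf'
    refine ⟨fr ++ new, ?_, hk', hrk, ?_, ?_, ?_, houts, ?_⟩
    · intro g hg
      rcases List.mem_append.mp hg with hg | hg
      · exact hFOK g hg
      · exact hFOKn g hg
    · simp only [List.length_append]
      rw [hseq', hseq]
      omega
    · simp only
      rw [msgsOf_append, List.append_assoc, hbuf', hmsgs, List.append_assoc]
    · simp only
      rw [List.append_assoc, hobuf', ← List.append_assoc, hout, stream_append,
        hseq]
      have : 0 + 2 * fr.length = 2 * fr.length := by omega
      rw [this]
    · rcases hrecv with ⟨r, hr, h1, h2, h3, h4, h5, h6⟩ | hbad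
      · left
        refine ⟨r, by simp only [List.length_append]; omega, h1, h2, ?_, ?_, ?_, ?_⟩
        · simpa [List.take_append_of_le_length hr] using h3
        · rw [List.drop_append_of_le_length hr, stream_append]
          exact h4.trans (List.prefix_append _ _)
        · intro hlt
          simp only [List.length_append] at hlt
          by_cases hrf : r < fr.length
          · rw [List.getElem_append_left hrf]
            exact h5 hrf
          · have hre : r = fr.length := by omega
            have hnil : cfg.rst.buf = [] := by
              have := h4
              rw [hre, List.drop_length, stream_nil] at this
              exact List.prefix_nil.mp this
            rw [hnil]
            have h0 : lLen A = 2 + A.lTag := rfl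
            simp only [List.length_nil]
            omega
        · simp only [recvConcat] at h6 ⊢
          rw [h6, List.take_append_of_le_length hr]
      · right
        exact hbad
  | recv cfg c fuel st' m cl ops cfg' hpref hrc he ih =>
    intro hI
    apply ih
    obtain ⟨fr, hFOK, hsk, hrk, hseq, hmsgs, hout, houts, hrecv⟩ := hI
    have hconcat : ((cfg.recvOuts ++ [(m, cl)]).map Prod.fst).foldr (· ++ ·) [] =
        (cfg.recvOuts.map Prod.fst).foldr (· ++ ·) [] ++ m := foldr_map_snoc _ _
    rcases hrecv with ⟨r, hr, h1, h2, h3, h4, h5, h6⟩ | ⟨hb1, hb2, hb3⟩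
    · -- receiver not failed
      rw [recvCall, if_neg (by rw [h1]; simp)] at hrc
      have hpre0 : cfg.rst.buf ++ c <+: stream A k (2 * r) (fr.drop r) := by
        have hx1 : cfg.sentOut <+: stream A k 0 fr := ⟨cfg.sst.obuf, hout⟩
        have hx2 : stream A k 0 fr =
            stream A k 0 (fr.take r) ++ stream A k (2 * r) (fr.drop r) := by
          conv_lhs => rw [← List.take_append_drop r fr]
          rw [stream_append]
          have : (fr.take r).length = r := by simp [List.length_take]; omega
          rw [this]
          have : 0 + 2 * r = 2 * r := by omega
          rw [this]
        have hx3 : (stream A k 0 (fr.take r) ++ cfg.rst.buf) ++ c <+: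
            stream A k 0 (fr.take r) ++ stream A k (2 * r) (fr.drop r) := by
          rw [← h3, ← hx2]
          exact hpref.trans hx1
        rw [List.append_assoc] at hx3
        exact (List.prefix_append_right_inj _).mp hx3
      have hloop := recvLoop_ok k fuel { cfg.rst with buf := cfg.rst.buf ++ c } [] (fr.drop r)
        st' m cl hrk h1 (fun g hg => hFOK g (List.drop_subset _ _ hg)) (by simpa [h2] using hpre0) hrc
      obtain ⟨hcl, hk2, hres⟩ := hloop
      subst hcl
      rcases hres with ⟨d, hd, hfail', hseq', hmout, hbufeq, hpre', hbound'⟩ | ⟨hfail', hm, hT⟩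
      · refine ⟨fr, hFOK, hsk, hk2, hseq, hmsgs, hout, ?_, Or.inl ⟨r + d, ?_, hfail', ?_, ?_, ?_, ?_, ?_⟩⟩
        · intro q hq
          rcases List.mem_append.mp hq with hq | hq
          · exact houts q hq
          · simp at hq; rw [hq]
        · have := (List.length_drop : (fr.drop r).length = fr.length - r)
          omega
        · simp only at hseq'
          rw [hseq', h2]
          omega
        · simp only at hbufeq ⊢
          rw [h3, List.take_add, stream_append]
          have hlt2 : (fr.take r).length = r := by simp [List.length_take]; omega
          rw [hlt2, Nat.zero_add, ← h2]
          simp only [List.append_assoc]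
          congr 1
        · simp only at hpre' ⊢
          have hdd : (fr.drop r).drop d = fr.drop (r + d) := by
            rw [List.drop_drop]
            try rw [Nat.add_comm d r]
          rw [← hdd]
          have hnum : 2 * (r + d) = cfg.rst.seqno + 2 * d := by rw [h2]; omega
          rw [hnum]
          exact hpre'
        · intro hlt
          have hlt' : d < (fr.drop r).length := by
            rw [List.length_drop]
            omega
          have hb := hbound' hlt'
          have hge : (fr.drop r)[d]'hlt' = fr[r + d]'hlt := by
            rw [List.getElem_drop]
          rwa [hge] at hb
        · simp only [recvConcat] at h6 ⊢
          rw [hconcat, h6, hmout, List.nil_append, List.take_add, msgsOf_append]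
      · refine ⟨fr, hFOK, hsk, hk2, hseq, hmsgs, hout, ?_, Or.inr ⟨hfail', hT, ?_⟩⟩
        · intro q hq
          rcases List.mem_append.mp hq with hq | hq
          · exact houts q hq
          · simp at hq; rw [hq]
        · have hnilmsgs : ∀ g ∈ fr, g.2 = [] := by
            intro g hg
            rcases (hFOK g hg).2 with hgood | hbad
            · exfalso
              have : 65536 ≤ flc A g := by
                have h0 : flc A g = 2 + g.1 + g.2.length + A.lTag := rfl
                omega
              omega
            · exact hbad.1
          simp only [recvConcat] at h6 ⊢
          rw [hconcat, h6, hm, List.append_nil]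
          exact msgsOf_eq_nil fun g hg => hnilmsgs g (List.take_subset _ _ hg)
    · -- receiver already failed
      rw [recvCall, if_pos (by rw [hb1])] at hrc
      simp only [Option.some.injEq, Prod.mk.injEq] at hrc
      obtain ⟨hrc1, hrc2, hrc3⟩ := hrc
      subst hrc2
      subst hrc3
      refine ⟨fr, hFOK, hsk, by rw [← hrc1]; exact hrk, hseq, hmsgs, hout, ?_,
        Or.inr ⟨by rw [← hrc1]; exact hb1, hb2, ?_⟩⟩
      · intro q hq
        rcases List.mem_append.mp hq with hq | hq
        · exact houts q hq
        · simp at hq; rw [hq]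
      · simp only [recvConcat] at hb3 ⊢
        rw [hconcat, hb3, List.nil_append]

lemma sendFlags_cons_send (m : Bytes) (p : ℤ) (f : Bool) (ops : List Op) :
    sendFlags (Op.send m p f :: ops) = f :: sendFlags ops := rfl

lemma sendFlags_cons_recv (c : Bytes) (ops : List Op) :
    sendFlags (Op.recv c :: ops) = sendFlags ops := rfl

lemma exec_sst_const {cfg ops cfg'} (hE : Exec A cfg ops cfg') (h : sendFlags ops = []) :
    cfg'.sst = cfg.sst := by
  induction hE with
  | nil => rfl
  | send cfg m p f fuel st' c ops cfg' hs he ih =>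
    rw [sendFlags_cons_send] at h
    exact absurd h (List.cons_ne_nil _ _)
  | recv cfg c fuel st' m cl ops cfg' hpref hrc he ih =>
    rw [sendFlags_cons_recv] at h
    exact ih h

lemma exec_drained {cfg ops cfg'} (hE : Exec A cfg ops cfg')
    (h : (sendFlags ops).getLast? = some true) :
    cfg'.sst.buf = [] ∧ cfg'.sst.obuf = [] := by
  induction hE with
  | nil cfg => simp [sendFlags] at h
  | send cfg m p f fuel st' c ops cfg' hs he ih =>
    by_cases h0 : sendFlags ops = []
    · rw [sendFlags_cons_send, h0] at h
      simp at h
      subst h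
      rw [sendCall] at hs
      obtain ⟨new, -, -, -, -, -, hfl⟩ :=
        sendFuel_ok cfg.sst.k fuel { cfg.sst with buf := cfg.sst.buf ++ m } p true st' c rfl hs
      have hst := exec_sst_const he h0
      rw [hst]
      exact hfl rfl
    · apply ih
      rw [sendFlags_cons_send] at h
      cases hso : sendFlags ops with
      | nil => exact absurd hso h0
      | cons b l =>
        rw [hso] at h
        rwa [List.getLast?_cons_cons] at h
  | recv cfg c fuel st' m cl ops cfg' hpref hrc he ih =>
    apply ih
    rwa [sendFlags_cons_recv] at h

end Exec

section Final

variable {A : AEAD}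

lemma stream_take_drop (k : A.Key) (fr : List (ℕ × Bytes)) (r : ℕ) (hr : r ≤ fr.length) :
    stream A k 0 fr = stream A k 0 (fr.take r) ++ stream A k (2 * r) (fr.drop r) := by
  conv_lhs => rw [← List.take_append_drop r fr]
  rw [stream_append]
  have h1 : (fr.take r).length = r := by simp [List.length_take]; omega
  rw [h1, Nat.zero_add]

lemma all_msgs_nil {fr : List (ℕ × Bytes)} (hT : 65536 ≤ 2 + A.lTag)
    (hFOK : ∀ g ∈ fr, FOK A g) : ∀ g ∈ fr, g.2 = [] := by
  intro g hg
  rcases (hFOK g hg).2 with hgood | hbad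
  · exfalso
    have h0 : flc A g = 2 + g.1 + g.2.length + A.lTag := rfl
    omega
  · exact hbad.1

lemma chinv_init (k : A.Key) : ChInv A k (initConfig A k) := by
  refine ⟨[], ?_, rfl, rfl, ?_, ?_, ?_, ?_, Or.inl ⟨0, ?_, rfl, rfl, ?_, ?_, ?_, ?_⟩⟩ <;>
    simp [initConfig, stream_nil, msgsOf_nil, recvConcat]

end Final


/-- The datastream FEP construction satisfies datastream
correctness with respect to the never-close function `𝒞 ≡ 0`: for every honest
execution,
(1) **Stream Preservation**: the concatenation of the `Recv` message outputs is
a prefix of the concatenation of the `Send` plaintext inputs;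
(2) **Flushing**: if the final `Send` call has flush flag `1` and the
concatenation of the `Recv` inputs equals the concatenation of the `Send`
outputs, then the concatenation of the `Recv` message outputs equals the
concatenation of the `Send` plaintext inputs;
(3) **Close Coherence**: once some `Recv` call outputs close flag `1`, every
later `Recv` call outputs `(ε, 0)`; and
(4) **Close Correctness**: every `Recv` close output equals `0`. -/
theorem stmt6 (A : AEAD) (k : A.Key) (ops : List Op) (cfg : Config A)
    (h : Exec A (initConfig A k) ops cfg) :
    (recvConcat A cfg <+: cfg.sentMsgs) ∧
    ((sendFlags ops).getLast? = some true → cfg.recvIn = cfg.sentOut →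
      recvConcat A cfg = cfg.sentMsgs) ∧
    (∀ (i j : ℕ) (hi : i < cfg.recvOuts.length) (hj : j < cfg.recvOuts.length),
      i < j → (cfg.recvOuts[i]'hi).2 = true → cfg.recvOuts[j]'hj = ([], false)) ∧
    (∀ q ∈ cfg.recvOuts, q.2 = false) := by
  have hI := exec_inv k h (chinv_init k)
  obtain ⟨fr, hFOK, hsk, hrk, hseq, hmsgs, hout, houts, hrecv⟩ := hI
  refine ⟨?_, ?_, ?_, houts⟩
  · -- Stream Preservation
    rcases hrecv with ⟨r, hr, h1, h2, h3, h4, h5, h6⟩ | ⟨hb1, hb2, hb3⟩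
    · rw [h6, hmsgs]
      refine ⟨msgsOf (fr.drop r) ++ cfg.sst.buf, ?_⟩
      rw [← List.append_assoc, ← msgsOf_append, List.take_append_drop]
    · rw [hb3]
      exact List.nil_prefix
  · -- Flushing
    intro hlast heq
    obtain ⟨hbuf0, hobuf0⟩ := exec_drained h hlast
    have hsout : cfg.sentOut = stream A k 0 fr := by
      rw [← hout, hobuf0, List.append_nil]
    rcases hrecv with ⟨r, hr, h1, h2, h3, h4, h5, h6⟩ | ⟨hb1, hb2, hb3⟩
    · have hbufstream : cfg.rst.buf = stream A k (2 * r) (fr.drop r) := by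
        have hx : stream A k 0 (fr.take r) ++ cfg.rst.buf =
            stream A k 0 (fr.take r) ++ stream A k (2 * r) (fr.drop r) := by
          rw [← h3, heq, hsout]
          exact stream_take_drop k fr r hr
        exact List.append_cancel_left hx
      have hre : r = fr.length := by
        by_contra hne
        have hlt : r < fr.length := lt_of_le_of_ne hr hne
        have h5' := h5 hlt
        have hde : fr.drop r = fr[r] :: fr.drop (r + 1) := List.drop_eq_getElem_cons hlt
        rw [hbufstream, hde, stream_cons] at h5'
        simp only [List.length_append, frameB_length] at h5'
        omega
      rw [h6, hre, List.take_length, hmsgs, hbuf0, List.append_nil]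
    · rw [hb3, hmsgs, hbuf0, List.append_nil]
      exact (msgsOf_eq_nil (all_msgs_nil hb2 hFOK)).symm
  · -- Close Coherence
    intro i j hi hj hij htrue
    have := houts (cfg.recvOuts[i]'hi) (List.getElem_mem hi)
    rw [htrue] at this
    exact absurd this (by simp)
end

section
/- The datastream FEP construction is channel length regular: for any two n-length message lists M^0 and M^1 with |M^0_i| = |M^1_i| for every i, any n-length integer list P, and any n-length flush-flag list F, if C^0_i and C^1_i denote the ciphertext fragments produced by calling Send sequentially for i = 1..n (threading the sender state from Init) on inputs (M^0_i, P_i, F_i) and (M^1_i, P_i, F_i) respectively, then |C^0_i| = |C^1_i| for every i. -/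
/-- Calling `Send` sequentially on a list of `(message, length, flush)` inputs,
threading the sender state, and collecting the output ciphertext fragments. -/
def sendSeq (A : AEAD) (fuel : ℕ) :
    SenderSt A → List (Bytes × ℤ × Bool) → Option (SenderSt A × List Bytes)
  | st, [] => some (st, [])
  | st, (m, p, f) :: rest =>
    match sendCall A fuel st m p f with
    | none => none
    | some (st', c) =>
      match sendSeq A fuel st' rest with
      | none => none
      | some (stf, cs) => some (stf, c :: cs)

/-! `Send` branches only on `|buf|` and `|obuf|`, and by length additivity of `Enc` each
recursive step changes these lengths by amounts that again depend only on them. Hence two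
executions of `Send` started from states whose buffers have equal lengths, on messages of
equal lengths, return fragments of equal lengths and states whose buffers have equal lengths;
threading this invariant through the sequence of calls gives length regularity. -/

namespace SenderSt

variable {A : AEAD}

def LengthEq (s t : SenderSt A) : Prop :=
  s.buf.length = t.buf.length ∧ s.obuf.length = t.obuf.length

theorem LengthEq.retCond_iff {s t : SenderSt A} (h : s.LengthEq t) (p : ℤ) (f : Bool) :
    retCond A s p f ↔ retCond A t p f := by
  simp only [retCond, ← List.length_eq_zero_iff, h.1, h.2]

theorem LengthEq.mkBlocks {s t : SenderSt A} (h : s.LengthEq t) (p : ℤ) :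
    (mkBlocks A s p).LengthEq (mkBlocks A t p) := by
  simp [LengthEq, _root_.mkBlocks, A.lenAdd, enc2, h.1, h.2]

end SenderSt

section

open SenderSt

variable {A : AEAD}

theorem sendFuel_lengthEq {p : ℤ} {f : Bool} :
    ∀ {fuel0 fuel1 : ℕ} {s t s' t' : SenderSt A} {c0 c1 : Bytes}, s.LengthEq t →
      sendFuel A fuel0 s p f = some (s', c0) → sendFuel A fuel1 t p f = some (t', c1) →
      s'.LengthEq t' ∧ c0.length = c1.length
  | 0, _, _, _, _, _, _, _, _, h0, _ => by simp [sendFuel] at h0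
  | _ + 1, 0, _, _, _, _, _, _, _, _, h1 => by simp [sendFuel] at h1
  | _ + 1, _ + 1, s, t, _, _, _, _, hst, h0, h1 => by
    rw [sendFuel] at h0 h1
    by_cases hret : retCond A s p f
    · rw [if_pos hret] at h0
      rw [if_pos ((hst.retCond_iff p f).1 hret)] at h1
      cases h0
      cases h1
      simp [LengthEq, hst.1, hst.2]
    · rw [if_neg hret] at h0
      rw [if_neg (mt (hst.retCond_iff p f).2 hret)] at h1
      exact sendFuel_lengthEq (hst.mkBlocks p) h0 h1

theorem sendCall_lengthEq {fuel0 fuel1 : ℕ} {s t s' t' : SenderSt A} {m0 m1 c0 c1 : Bytes}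
    {p : ℤ} {f : Bool} (hst : s.LengthEq t) (hm : m0.length = m1.length)
    (h0 : sendCall A fuel0 s m0 p f = some (s', c0))
    (h1 : sendCall A fuel1 t m1 p f = some (t', c1)) :
    s'.LengthEq t' ∧ c0.length = c1.length := by
  unfold sendCall at h0 h1
  refine sendFuel_lengthEq ?_ h0 h1
  exact ⟨by simp [hst.1, hm], hst.2⟩

theorem sendSeq_cons_eq_some {fuel : ℕ} {s s' : SenderSt A} {m : Bytes} {p : ℤ} {f : Bool}
    {L : List (Bytes × ℤ × Bool)} {C : List Bytes}
    (h : sendSeq A fuel s ((m, p, f) :: L) = some (s', C)) :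
    ∃ s₁ c C', sendCall A fuel s m p f = some (s₁, c) ∧ sendSeq A fuel s₁ L = some (s', C') ∧
      C = c :: C' := by
  simp only [sendSeq] at h
  split at h
  · contradiction
  · split at h
    · contradiction
    · cases h
      exact ⟨_, _, _, ‹_›, ‹_›, rfl⟩

theorem sendSeq_forall₂_length_eq {fuel0 fuel1 : ℕ} {L0 L1 : List (Bytes × ℤ × Bool)}
    (hL : List.Forall₂ (fun a b => a.1.length = b.1.length ∧ a.2 = b.2) L0 L1) :
    ∀ {s t s' t' : SenderSt A} {C0 C1 : List Bytes}, s.LengthEq t →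
      sendSeq A fuel0 s L0 = some (s', C0) → sendSeq A fuel1 t L1 = some (t', C1) →
      List.Forall₂ (fun c0 c1 : Bytes => c0.length = c1.length) C0 C1 := by
  induction hL with
  | nil =>
    intro s t s' t' C0 C1 _ h0 h1
    cases h0
    cases h1
    exact .nil
  | @cons a b _ _ hab _ ih =>
    obtain ⟨m0, p, f⟩ := a
    obtain ⟨m1, p', f'⟩ := b
    obtain ⟨hm, hpf⟩ := hab
    obtain ⟨rfl, rfl⟩ : p = p' ∧ f = f' := Prod.mk.inj hpf
    intro s t s' t' C0 C1 hst h0 h1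
    obtain ⟨s₁, c0, C0', hc0, hrest0, rfl⟩ := sendSeq_cons_eq_some h0
    obtain ⟨t₁, c1, C1', hc1, hrest1, rfl⟩ := sendSeq_cons_eq_some h1
    obtain ⟨hst₁, hc⟩ := sendCall_lengthEq hst hm hc0 hc1
    exact .cons hc (ih hst₁ hrest0 hrest1)

end

theorem stmt7_general (A : AEAD) (k : A.Key) (fuel0 fuel1 : ℕ)
    (M0 M1 : List Bytes) (P : List ℤ) (F : List Bool)
    (hM01 : M0.length = M1.length)
    (hM : ∀ (i : ℕ) (h0 : i < M0.length) (h1 : i < M1.length),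
      (M0[i]'h0).length = (M1[i]'h1).length)
    (st0 st1 : SenderSt A) (C0 C1 : List Bytes)
    (h0 : sendSeq A fuel0 ⟨k, 0, [], []⟩ (M0.zip (P.zip F)) = some (st0, C0))
    (h1 : sendSeq A fuel1 ⟨k, 0, [], []⟩ (M1.zip (P.zip F)) = some (st1, C1)) :
    ∀ (i : ℕ) (hi0 : i < C0.length) (hi1 : i < C1.length),
      (C0[i]'hi0).length = (C1[i]'hi1).length := by
  have hinputs : List.Forall₂ (fun a b : Bytes × ℤ × Bool => a.1.length = b.1.length ∧ a.2 = b.2)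
      (M0.zip (P.zip F)) (M1.zip (P.zip F)) := by
    refine List.forall₂_iff_get.2 ⟨by simp [hM01], fun i hi0 hi1 => ?_⟩
    simp only [List.length_zip, lt_min_iff] at hi0 hi1
    simpa using hM i hi0.1 hi1.1
  have hC := sendSeq_forall₂_length_eq hinputs ⟨rfl, rfl⟩ h0 h1
  exact fun i hi0 hi1 => (List.forall₂_iff_get.1 hC).2 i hi0 hi1

/-- The datastream FEP construction is channel length regular:
for any two `n`-length message lists `M⁰` and `M¹` with `|M⁰ᵢ| = |M¹ᵢ|` for
every `i`, any `n`-length integer list `P`, and any `n`-length flush-flag list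
`F`, the ciphertext fragments `C⁰ᵢ` and `C¹ᵢ` produced by calling `Send`
sequentially for `i = 1..n` (threading the sender state from `Init`) on inputs
`(M⁰ᵢ, Pᵢ, Fᵢ)` and `(M¹ᵢ, Pᵢ, Fᵢ)` respectively satisfy `|C⁰ᵢ| = |C¹ᵢ|` for
every `i`. -/
theorem stmt7 (A : AEAD) (k : A.Key) (fuel0 fuel1 : ℕ)
    (M0 M1 : List Bytes) (P : List ℤ) (F : List Bool)
    (hM01 : M0.length = M1.length) (hP : P.length = M0.length)
    (hF : F.length = M0.length)
    (hM : ∀ (i : ℕ) (h0 : i < M0.length) (h1 : i < M1.length),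
      (M0[i]'h0).length = (M1[i]'h1).length)
    (st0 st1 : SenderSt A) (C0 C1 : List Bytes)
    (h0 : sendSeq A fuel0 ⟨k, 0, [], []⟩ (M0.zip (P.zip F)) = some (st0, C0))
    (h1 : sendSeq A fuel1 ⟨k, 0, [], []⟩ (M1.zip (P.zip F)) = some (st1, C1)) :
    ∀ (i : ℕ) (hi0 : i < C0.length) (hi1 : i < C1.length),
      (C0[i]'hi0).length = (C1[i]'hi1).length :=
  stmt7_general A k fuel0 fuel1 M0 M1 P F hM01 hM st0 st1 C0 C1 h0 h1
end

section
/- The datastream FEP construction satisfies Traffic Shaping: for any sender state st_S = (k, seqno, buf, obuf), any byte string m, any flush flag f ∈ {0,1}, and any integer p ≥ 0, the ciphertext fragment c returned by Send(st_S, m, p, f) satisfies |c| = p if f = 0 and |c| ≥ p if f = 1. -/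
-- Only the final cut of `obuf` determines `|c|`; the blocks formed by `mkBlocks` play no role.
lemma exists_obuf_of_sendFuel_eq_some {A : AEAD} {p : ℤ} {f : Bool} {st' : SenderSt A}
    {c : Bytes} :
    ∀ {fuel : ℕ} {st : SenderSt A}, sendFuel A fuel st p f = some (st', c) →
      ∃ s : SenderSt A, p ≤ (s.obuf.length : ℤ) ∧
        c = s.obuf.take (max p (if f then (s.obuf.length : ℤ) else 0)).toNat
  | 0, _, h => by simp [sendFuel] at h
  | fuel + 1, st, h => by
    rw [sendFuel] at h
    split at h
    case isTrue hret =>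
      obtain ⟨-, rfl⟩ := Prod.mk.inj (Option.some.inj h)
      exact ⟨st, hret.1, rfl⟩
    case isFalse => exact exists_obuf_of_sendFuel_eq_some h

lemma length_take_toNat_max_ite {α : Type*} (l : List α) {p : ℤ} (hp : 0 ≤ p)
    (hl : p ≤ l.length) (f : Bool) :
    ((l.take (max p (if f then (l.length : ℤ) else 0)).toNat).length : ℤ) =
      if f then (l.length : ℤ) else p := by
  cases f <;> simp only [Bool.false_eq_true, if_true, if_false, List.length_take] <;> omega

/-- The datastream FEP construction satisfies Traffic Shaping:
for any sender state `st_S`, any byte string `m`, any flush flag `f`, and any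
integer `p ≥ 0`, the ciphertext fragment `c` returned by `Send(st_S, m, p, f)`
satisfies `|c| = p` if `f = 0` and `|c| ≥ p` if `f = 1`. -/
theorem stmt8 (A : AEAD) (fuel : ℕ) (st : SenderSt A) (m : Bytes)
    (p : ℤ) (hp : 0 ≤ p) (f : Bool) (st' : SenderSt A) (c : Bytes)
    (h : sendCall A fuel st m p f = some (st', c)) :
    (f = false → (c.length : ℤ) = p) ∧ (f = true → p ≤ (c.length : ℤ)) := by
  obtain ⟨s, hs, rfl⟩ := exists_obuf_of_sendFuel_eq_some h
  rw [length_take_toNat_max_ite s.obuf hp hs]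
  cases f <;> simp [hs]
end
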